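/- Let 𝒳, 𝒳' ⊆ Φ be almost parabolic sets with R_𝒳 = R_𝒳'. Then every root of 𝒯 = 𝒳 ∖ 𝒳' is orthogonal to every root of 𝒱 = 𝒳 ∩ 𝒳': ⟨β,γ⟩ = 0 for all β ∈ 𝒯 and γ ∈ 𝒱. -/

import Mathlib

/-!
Context: `(W, S)` is a Coxeter system for the Coxeter matrix `M` (Mathlib's convention:
the entry `0` encodes `∞`).  `V = ⊕_{s ∈ S} ℝ·α_s` is realized as `S →₀ ℝ` with
`α_s = simpleRoot s`, equipped with the canonical symmetric bilinear form `bform M`.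
The canonical faithful form-preserving representation `ρ : W →* GL(V)` and the map
`β ↦ r_β` assigning to each root its reflection are given as data, characterized by
the usual formulas (`hρ`, `hρinj`, `hρform`, `hr` below).
-/

noncomputable section

open scoped Real Pointwise

variable {S W : Type*}

/-- The simple root `α_s`. -/
def simpleRoot (s : S) : S →₀ ℝ := Finsupp.single s 1

/-- The entry `⟨α_s, α_t⟩ = -cos (π / m_{s,t})` of the canonical bilinear form,
interpreted as `-1` when `m_{s,t} = ∞` (encoded by `0`). -/
def formEntry (M : CoxeterMatrix S) (s t : S) : ℝ :=
  if M s t = 0 then -1 else -Real.cos (Real.pi / (M s t : ℝ))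

/-- The canonical symmetric bilinear form on `V = ⊕_{s ∈ S} ℝ·α_s`. -/
def bform (M : CoxeterMatrix S) : (S →₀ ℝ) →ₗ[ℝ] (S →₀ ℝ) →ₗ[ℝ] ℝ :=
  Finsupp.basisSingleOne.constr ℝ fun s =>
    Finsupp.basisSingleOne.constr ℝ fun t => formEntry M s t

variable [Group W]

/-- The root system `Φ = { w (α_s) : w ∈ W, s ∈ S }`. -/
def rootSystem (ρ : W →* ((S →₀ ℝ) ≃ₗ[ℝ] (S →₀ ℝ))) : Set (S →₀ ℝ) :=
  Set.range fun p : W × S => ρ p.1 (simpleRoot p.2)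

/-- A subset `𝒳 ⊆ V` is almost parabolic (AP): (AP1) the vectors of `𝒳` are linearly
independent, and (AP2) any two elements of `𝒳` are of the form `w (α_s)`, `w (α_t)` for a
common `w ∈ W`. -/
def IsAP (ρ : W →* ((S →₀ ℝ) ≃ₗ[ℝ] (S →₀ ℝ))) (𝒳 : Set (S →₀ ℝ)) : Prop :=
  LinearIndependent ℝ ((↑) : 𝒳 → (S →₀ ℝ)) ∧
    ∀ β ∈ 𝒳, ∀ γ ∈ 𝒳, ∃ (w : W) (s t : S),
      ρ w (simpleRoot s) = β ∧ ρ w (simpleRoot t) = γ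

/-- `g ∈ W` is a product of `n` elements of `T`. -/
def HasLen (T : Set W) (g : W) (n : ℕ) : Prop :=
  ∃ l : List W, (∀ x ∈ l, x ∈ T) ∧ l.prod = g ∧ l.length = n

/-- `u` has minimal word length (w.r.t. the generating set `T`) in the coset `u·H`. -/
def MinimalInCoset (T : Set W) (H : Subgroup W) (u : W) : Prop :=
  ∀ h ∈ H, ∀ m, HasLen T (u * h) m → ∃ n ≤ m, HasLen T u n

/-!
Since `r_β ∈ R_𝒳'`, some `β' ∈ 𝒳'` has the same reflection as `β`; unit vectors with equal
reflections agree up to sign, and `β ∉ 𝒳'`, so `-β ∈ 𝒳'`. Two distinct roots of an AP set are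
`w(α_s)` and `w(α_t)` with `s ≠ t`, so their inner product is `-cos (π / m_{s,t}) ≤ 0`. Applied
in `𝒳` this gives `⟨β, γ⟩ ≤ 0`; applied in `𝒳'` to `-β ≠ γ` (linear independence of `𝒳`
keeps `-β` out of `𝒳 ∋ γ`) it gives `⟨β, γ⟩ ≥ 0`.
-/

theorem bform_simpleRoot (M : CoxeterMatrix S) (s t : S) :
    bform M (simpleRoot s) (simpleRoot t) = formEntry M s t := by
  have h (u : S) : simpleRoot u = Finsupp.basisSingleOne u := by simp [simpleRoot]
  rw [h, h, bform, Module.Basis.constr_basis, Module.Basis.constr_basis]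

theorem formEntry_self (M : CoxeterMatrix S) (s : S) : formEntry M s s = 1 := by
  simp [formEntry]

theorem formEntry_nonpos (M : CoxeterMatrix S) {s t : S} (h : s ≠ t) :
    formEntry M s t ≤ 0 := by
  unfold formEntry
  split_ifs with h0
  · norm_num
  · have hm : (2 : ℝ) ≤ M s t := by
      have := M.off_diagonal s t h
      exact_mod_cast (show 2 ≤ M s t by omega)
    have hlo : 0 ≤ π / M s t := by positivity
    have hhi : π / M s t ≤ π / 2 := div_le_div_of_nonneg_left Real.pi_pos.le two_pos hm
    linarith [Real.cos_nonneg_of_mem_Icc ⟨by linarith [Real.pi_pos], hhi⟩]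

theorem neg_notMem_of_linearIndependent {V : Type*} [AddCommGroup V] [Module ℝ V]
    {𝒳 : Set V} (h𝒳 : LinearIndependent ℝ ((↑) : 𝒳 → V)) {β : V} (hβ : β ∈ 𝒳)
    (hβ0 : β ≠ 0) : -β ∉ 𝒳 := by
  intro hnegβ
  have hne : β ≠ -β := by
    intro h
    have h2 : (2 : ℝ) • β = 0 := by rw [two_smul]; nth_rw 2 [h]; exact add_neg_cancel β
    exact hβ0 ((smul_eq_zero.mp h2).resolve_left two_ne_zero)
  have hpair : LinearIndepOn ℝ id {β, -β} :=
    LinearIndepOn.mono h𝒳 (Set.insert_subset hβ (Set.singleton_subset_iff.mpr hnegβ))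
  simpa using ((LinearIndepOn.pair_iff id hne).mp hpair 1 1 (by simp)).1

theorem eq_or_eq_neg_of_reflection_eq {V : Type*} [AddCommGroup V] [Module ℝ V]
    (B : V →ₗ[ℝ] V →ₗ[ℝ] ℝ) {β β' : V} (hβ : B β β = 1) (hβ' : B β' β' = 1)
    (h : ∀ v, v - (2 * B β v) • β = v - (2 * B β' v) • β') : β' = β ∨ β' = -β := by
  set c := B β β'
  have hβ'_eq : β' = c • β := by
    have h2 : (2 * c) • β = (2 : ℝ) • β' := by
      simpa [hβ'] using sub_right_injective (h β')
    rw [mul_smul] at h2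
    exact (smul_right_injective V two_ne_zero h2).symm
  have hcc : c * c = 1 := by
    rw [hβ'_eq] at hβ'
    simpa [hβ, mul_comm] using hβ'
  rcases mul_self_eq_one_iff.mp hcc with hc | hc
  · simp [hβ'_eq, hc]
  · simp [hβ'_eq, hc]

section RootSystem

variable {M : CoxeterMatrix S} {ρ : W →* ((S →₀ ℝ) ≃ₗ[ℝ] (S →₀ ℝ))}

theorem bform_self_of_mem_rootSystem
    (hρform : ∀ (w : W) (x y : S →₀ ℝ), bform M (ρ w x) (ρ w y) = bform M x y)
    {β : S →₀ ℝ} (hβ : β ∈ rootSystem ρ) : bform M β β = 1 := by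
  obtain ⟨⟨w, s⟩, rfl⟩ := hβ
  rw [hρform, bform_simpleRoot, formEntry_self]

theorem reflection_apply {cs : CoxeterSystem M W}
    (hρ : ∀ (s : S) (v : S →₀ ℝ),
      ρ (cs.simple s) v = v - (2 * bform M (simpleRoot s) v) • simpleRoot s)
    (hρform : ∀ (w : W) (x y : S →₀ ℝ), bform M (ρ w x) (ρ w y) = bform M x y)
    {r : (S →₀ ℝ) → W} (hr : ∀ (w : W) (s : S), r (ρ w (simpleRoot s)) = w * cs.simple s * w⁻¹)
    {β : S →₀ ℝ} (hβ : β ∈ rootSystem ρ) (v : S →₀ ℝ) :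
    ρ (r β) v = v - (2 * bform M β v) • β := by
  obtain ⟨⟨w, s⟩, rfl⟩ := hβ
  have hcancel : ρ w (ρ w⁻¹ v) = v := by
    rw [← LinearEquiv.mul_apply, ← map_mul, mul_inv_cancel, map_one]
    rfl
  have hform : bform M (simpleRoot s) (ρ w⁻¹ v) = bform M (ρ w (simpleRoot s)) v := by
    conv_rhs => rw [← hcancel, hρform]
  simp only [hr, map_mul, LinearEquiv.mul_apply, hρ, map_sub, map_smul, hcancel, hform]

theorem bform_nonpos_of_isAP
    (hρform : ∀ (w : W) (x y : S →₀ ℝ), bform M (ρ w x) (ρ w y) = bform M x y)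
    {𝒳 : Set (S →₀ ℝ)} (h𝒳 : IsAP ρ 𝒳) {β γ : S →₀ ℝ} (hβ : β ∈ 𝒳) (hγ : γ ∈ 𝒳)
    (hne : β ≠ γ) : bform M β γ ≤ 0 := by
  obtain ⟨w, s, t, rfl, rfl⟩ := h𝒳.2 β hβ γ hγ
  rw [hρform, bform_simpleRoot]
  exact formEntry_nonpos M fun hst => hne (by rw [hst])

end RootSystem

theorem statement7_general
    (M : CoxeterMatrix S) (cs : CoxeterSystem M W)
    (ρ : W →* ((S →₀ ℝ) ≃ₗ[ℝ] (S →₀ ℝ)))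
    (hρ : ∀ (s : S) (v : S →₀ ℝ),
      ρ (cs.simple s) v = v - (2 * bform M (simpleRoot s) v) • simpleRoot s)
    (hρform : ∀ (w : W) (x y : S →₀ ℝ), bform M (ρ w x) (ρ w y) = bform M x y)
    (r : (S →₀ ℝ) → W)
    (hr : ∀ (w : W) (s : S), r (ρ w (simpleRoot s)) = w * cs.simple s * w⁻¹)
    (𝒳 𝒳' : Set (S →₀ ℝ)) (h𝒳Φ : 𝒳 ⊆ rootSystem ρ) (h𝒳'Φ : 𝒳' ⊆ rootSystem ρ)
    (hAP : IsAP ρ 𝒳) (hAP' : IsAP ρ 𝒳')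
    (hR : r '' 𝒳 = r '' 𝒳') :
    ∀ β ∈ 𝒳 \ 𝒳', ∀ γ ∈ 𝒳 ∩ 𝒳', bform M β γ = 0 := by
  rintro β ⟨hβ𝒳, hβ𝒳'⟩ γ ⟨hγ𝒳, hγ𝒳'⟩
  have hunit : ∀ β ∈ rootSystem ρ, bform M β β = 1 :=
    fun _ => bform_self_of_mem_rootSystem hρform
  have hrefl := fun β (hβ : β ∈ rootSystem ρ) => reflection_apply hρ hρform hr hβ
  obtain ⟨β', hβ'𝒳', hrβ'⟩ : r β ∈ r '' 𝒳' := hR ▸ Set.mem_image_of_mem r hβ𝒳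
  have hβ'_eq : β' = β ∨ β' = -β :=
    eq_or_eq_neg_of_reflection_eq (bform M) (hunit β (h𝒳Φ hβ𝒳)) (hunit β' (h𝒳'Φ hβ'𝒳'))
      fun v => by rw [← hrefl β (h𝒳Φ hβ𝒳), ← hrefl β' (h𝒳'Φ hβ'𝒳'), hrβ']
  have hnegβ𝒳' : -β ∈ 𝒳' := by
    rcases hβ'_eq with rfl | rfl
    exacts [absurd hβ'𝒳' hβ𝒳', hβ'𝒳']
  have hnegβ𝒳 : -β ∉ 𝒳 := neg_notMem_of_linearIndependent hAP.1 hβ𝒳 fun h => by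
    simpa [h] using hunit β (h𝒳Φ hβ𝒳)
  have hle : bform M β γ ≤ 0 :=
    bform_nonpos_of_isAP hρform hAP hβ𝒳 hγ𝒳 fun h => hβ𝒳' (h ▸ hγ𝒳')
  have hle' : bform M (-β) γ ≤ 0 :=
    bform_nonpos_of_isAP hρform hAP' hnegβ𝒳' hγ𝒳' fun h => hnegβ𝒳 (h ▸ hγ𝒳)
  simp only [map_neg, LinearMap.neg_apply, neg_nonpos] at hle'
  exact le_antisymm hle hle'

/-- Let `𝒳, 𝒳' ⊆ Φ` be almost parabolic with `R_𝒳 = R_𝒳'`.  Then every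
root of `𝒯 = 𝒳 ∖ 𝒳'` is orthogonal to every root of `𝒱 = 𝒳 ∩ 𝒳'`. -/
theorem statement7
    (M : CoxeterMatrix S) (cs : CoxeterSystem M W)
    (ρ : W →* ((S →₀ ℝ) ≃ₗ[ℝ] (S →₀ ℝ)))
    (hρ : ∀ (s : S) (v : S →₀ ℝ),
      ρ (cs.simple s) v = v - (2 * bform M (simpleRoot s) v) • simpleRoot s)
    (hρinj : Function.Injective ρ)
    (hρform : ∀ (w : W) (x y : S →₀ ℝ), bform M (ρ w x) (ρ w y) = bform M x y)
    (r : (S →₀ ℝ) → W)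
    (hr : ∀ (w : W) (s : S), r (ρ w (simpleRoot s)) = w * cs.simple s * w⁻¹)
    (𝒳 𝒳' : Set (S →₀ ℝ)) (h𝒳Φ : 𝒳 ⊆ rootSystem ρ) (h𝒳'Φ : 𝒳' ⊆ rootSystem ρ)
    (hAP : IsAP ρ 𝒳) (hAP' : IsAP ρ 𝒳')
    (hR : r '' 𝒳 = r '' 𝒳') :
    ∀ β ∈ 𝒳 \ 𝒳', ∀ γ ∈ 𝒳 ∩ 𝒳', bform M β γ = 0 :=
  statement7_general M cs ρ hρ hρform r hr 𝒳 𝒳' h𝒳Φ h𝒳'Φ hAP hAP' hR
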